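/- Given a feasible P ∈ M(μ₁,…,μ_k) and alternative marginals μ'₁,…,μ'_k ∈ Δ_n, there exists P̂ ∈ M(μ'₁,…,μ'_k) with entrywise ℓ₁ distance ‖P̂ − P‖₁ ≤ 2 Σ_{i=1}^k ‖μ_i − μ'_i‖₁. -/

import Mathlib

/-
Rounding in two stages. First shrink `P` entrywise by `∏ᵢ min(1, μ'ᵢ(xᵢ)/μᵢ(xᵢ))`: the result `R`
has every marginal below `μ'`, and since `1 - ∏ aᵢ ≤ ∑ (1 - aᵢ)` on `[0, 1]`, the mass removed is at
most `∑ᵢ ∑ⱼ (μᵢⱼ - min(μᵢⱼ, μ'ᵢⱼ)) ≤ ∑ᵢ ‖μᵢ - μ'ᵢ‖₁`. Every deficit `μ'ᵢ - margᵢ R` then has the same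
total `s = 1 - ‖R‖₁`, so adding the nonnegative product tensor
`⊗ᵢ (μ'ᵢ - margᵢ R) / s^(k-1)` restores the marginals exactly at the cost of another `s` in `ℓ₁`.
-/

open Finset

noncomputable def marg {n k : ℕ} (P : (Fin k → Fin n) → ℝ) (i : Fin k) (j : Fin n) : ℝ :=
  ∑ x : Fin k → Fin n, if x i = j then P x else 0

def simplex {n : ℕ} (μ : Fin n → ℝ) : Prop :=
  (∀ j, 0 ≤ μ j) ∧ ∑ j, μ j = 1

noncomputable def transport {n k : ℕ} (μ : Fin k → Fin n → ℝ) : Set ((Fin k → Fin n) → ℝ) :=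
  {P | (∀ x, 0 ≤ P x) ∧ ∀ i j, marg P i j = μ i j}

noncomputable def dotT {n k : ℕ} (P C : (Fin k → Fin n) → ℝ) : ℝ :=
  ∑ x : Fin k → Fin n, P x * C x

noncomputable def MOT {n k : ℕ} (C : (Fin k → Fin n) → ℝ) (μ : Fin k → Fin n → ℝ) : ℝ :=
  sInf ((fun P => dotT P C) '' transport μ)

noncomputable def MINC {n k : ℕ} (C : (Fin k → Fin n) → ℝ) (p : Fin k → Fin n → ℝ) : ℝ :=
  ⨅ x : Fin k → Fin n, (C x - ∑ i, p i (x i))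

theorem Finset.one_sub_prod_le_sum_one_sub {ι R : Type*} [CommRing R] [LinearOrder R]
    [IsStrictOrderedRing R] (s : Finset ι) {a : ι → R} (h0 : ∀ i ∈ s, 0 ≤ a i)
    (h1 : ∀ i ∈ s, a i ≤ 1) : 1 - ∏ i ∈ s, a i ≤ ∑ i ∈ s, (1 - a i) := by
  classical
  induction s using Finset.induction_on with
  | empty => simp
  | insert i s hi ih =>
    rw [prod_insert hi, sum_insert hi]
    have hs0 : ∀ j ∈ s, 0 ≤ a j := fun j hj => h0 j (mem_insert_of_mem hj)
    have hs1 : ∀ j ∈ s, a j ≤ 1 := fun j hj => h1 j (mem_insert_of_mem hj)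
    have hprod : ∏ j ∈ s, a j ≤ 1 := prod_le_one hs0 hs1
    nlinarith [ih hs0 hs1, h0 i (mem_insert_self i s), h1 i (mem_insert_self i s)]

theorem Finset.prod_le_of_mem {ι R : Type*} [CommMonoidWithZero R] [PartialOrder R]
    [ZeroLEOneClass R] [PosMulMono R] {s : Finset ι} {a : ι → R} (h0 : ∀ i ∈ s, 0 ≤ a i)
    (h1 : ∀ i ∈ s, a i ≤ 1) {i : ι} (hi : i ∈ s) : ∏ l ∈ s, a l ≤ a i := by
  classical
  rw [← mul_prod_erase s a hi]
  exact mul_le_of_le_one_right (h0 i hi)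
    (prod_le_one (fun l hl => h0 l (mem_of_mem_erase hl)) fun l hl => h1 l (mem_of_mem_erase hl))

theorem min_one_div_mul_self {K : Type*} [Field K] [LinearOrder K] [IsStrictOrderedRing K]
    {a b : K} (ha : 0 ≤ a) (hb : 0 ≤ b) : min 1 (b / a) * a = min a b := by
  rcases ha.eq_or_lt with rfl | ha
  · simp [hb]
  · rw [min_mul_of_nonneg _ _ ha.le, one_mul, div_mul_cancel₀ _ ha.ne']

theorem pow_div_pow_sub_one {K : Type*} [Field K] (a : K) {k : ℕ} (hk : k ≠ 0) :
    a ^ k / a ^ (k - 1) = a := by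
  obtain ⟨m, rfl⟩ := Nat.exists_eq_succ_of_ne_zero hk
  rcases eq_or_ne a 0 with rfl | ha
  · simp
  · rw [Nat.succ_sub_one, pow_succ, mul_div_cancel_left₀ _ (pow_ne_zero _ ha)]

section Marginals

variable {n k : ℕ}

theorem marg_nonneg {P : (Fin k → Fin n) → ℝ} (hP : ∀ x, 0 ≤ P x) (i : Fin k) (j : Fin n) :
    0 ≤ marg P i j :=
  sum_nonneg fun x _ => by split_ifs <;> simp [hP x]

theorem marg_mono {P Q : (Fin k → Fin n) → ℝ} (h : ∀ x, P x ≤ Q x) (i : Fin k) (j : Fin n) :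
    marg P i j ≤ marg Q i j :=
  sum_le_sum fun x _ => by split_ifs <;> simp [h x]

theorem marg_mul_apply (P : (Fin k → Fin n) → ℝ) (f : Fin n → ℝ) (i : Fin k) (j : Fin n) :
    marg (fun x => P x * f (x i)) i j = f j * marg P i j := by
  rw [marg, marg, mul_sum]
  exact sum_congr rfl fun x _ => by split_ifs with h <;> simp [h, mul_comm]

theorem marg_add (P Q : (Fin k → Fin n) → ℝ) (i : Fin k) (j : Fin n) :
    marg (fun x => P x + Q x) i j = marg P i j + marg Q i j := by
  unfold marg
  rw [← sum_add_distrib]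
  exact sum_congr rfl fun x _ => by split_ifs <;> simp

theorem marg_div (P : (Fin k → Fin n) → ℝ) (a : ℝ) (i : Fin k) (j : Fin n) :
    marg (fun x => P x / a) i j = marg P i j / a := by
  unfold marg
  rw [sum_div]
  exact sum_congr rfl fun x _ => by split_ifs <;> simp

theorem sum_marg (P : (Fin k → Fin n) → ℝ) (i : Fin k) : ∑ j, marg P i j = ∑ x, P x := by
  unfold marg
  rw [sum_comm]
  simp

theorem sum_mul_apply (P : (Fin k → Fin n) → ℝ) (f : Fin n → ℝ) (i : Fin k) :
    ∑ x, P x * f (x i) = ∑ j, f j * marg P i j := by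
  simp only [← sum_marg _ i, marg_mul_apply]

theorem marg_prod (g : Fin k → Fin n → ℝ) (i : Fin k) (j : Fin n) :
    marg (fun x => ∏ l, g l (x l)) i j = g i j * ∏ l ∈ univ.erase i, ∑ j', g l j' := by
  set g' : Fin k → Fin n → ℝ := fun l j' => if l = i ∧ j' ≠ j then 0 else g l j'
  have hfiber : ∀ x : Fin k → Fin n,
      (if x i = j then ∏ l, g l (x l) else 0) = ∏ l, g' l (x l) := by
    intro x
    split_ifs with hx
    · exact prod_congr rfl fun l _ => by grind
    · exact (prod_eq_zero (mem_univ i) (by simp [g', hx])).symm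
  have hrow : ∑ j', g' i j' = g i j := by simp [g']
  have hrest : ∀ l ∈ univ.erase i, ∑ j', g' l j' = ∑ j', g l j' := fun l hl => by
    simp [g', ne_of_mem_erase hl]
  simp only [marg, hfiber]
  rw [← Fintype.prod_sum, ← mul_prod_erase univ _ (mem_univ i), hrow, prod_congr rfl hrest]

theorem sum_eq_one_of_mem_transport {μ : Fin k → Fin n → ℝ} (hμ : ∀ i, simplex (μ i))
    {P : (Fin k → Fin n) → ℝ} (hP : P ∈ transport μ) (i : Fin k) : ∑ x, P x = 1 := by
  rw [← sum_marg P i, ← (hμ i).2]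
  exact sum_congr rfl fun j _ => hP.2 i j

end Marginals

section Shrink

variable {n k : ℕ}

noncomputable def shrink (μ μ' : Fin k → Fin n → ℝ) (P : (Fin k → Fin n) → ℝ) :
    (Fin k → Fin n) → ℝ :=
  fun x => P x * ∏ i, min 1 (μ' i (x i) / μ i (x i))

variable {μ μ' : Fin k → Fin n → ℝ} {P : (Fin k → Fin n) → ℝ}

theorem min_one_div_mem_Icc (hP : P ∈ transport μ) (hμ' : ∀ i j, 0 ≤ μ' i j) (i : Fin k)
    (j : Fin n) : min 1 (μ' i j / μ i j) ∈ Set.Icc 0 1 := by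
  have hμ : 0 ≤ μ i j := hP.2 i j ▸ marg_nonneg hP.1 i j
  exact ⟨le_min zero_le_one (div_nonneg (hμ' i j) hμ), min_le_left _ _⟩

theorem shrink_nonneg (hP : P ∈ transport μ) (hμ' : ∀ i j, 0 ≤ μ' i j) (x : Fin k → Fin n) :
    0 ≤ shrink μ μ' P x :=
  mul_nonneg (hP.1 x) (prod_nonneg fun i _ => (min_one_div_mem_Icc hP hμ' i (x i)).1)

theorem shrink_le (hP : P ∈ transport μ) (hμ' : ∀ i j, 0 ≤ μ' i j) (x : Fin k → Fin n) :
    shrink μ μ' P x ≤ P x :=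
  mul_le_of_le_one_right (hP.1 x) (prod_le_one (fun i _ => (min_one_div_mem_Icc hP hμ' i (x i)).1)
    fun i _ => (min_one_div_mem_Icc hP hμ' i (x i)).2)

theorem marg_shrink_le (hP : P ∈ transport μ) (hμ' : ∀ i j, 0 ≤ μ' i j) (i : Fin k)
    (j : Fin n) : marg (shrink μ μ' P) i j ≤ μ' i j := by
  have hμ : 0 ≤ μ i j := hP.2 i j ▸ marg_nonneg hP.1 i j
  have hle : ∀ x, shrink μ μ' P x ≤ P x * min 1 (μ' i (x i) / μ i (x i)) := fun x =>
    mul_le_mul_of_nonneg_left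
      (prod_le_of_mem (fun l _ => (min_one_div_mem_Icc hP hμ' l (x l)).1)
        (fun l _ => (min_one_div_mem_Icc hP hμ' l (x l)).2) (mem_univ i)) (hP.1 x)
  calc marg (shrink μ μ' P) i j
      ≤ marg (fun x => P x * min 1 (μ' i (x i) / μ i (x i))) i j := marg_mono hle i j
    _ = min (μ i j) (μ' i j) := by
      rw [marg_mul_apply P (fun j => min 1 (μ' i j / μ i j)), hP.2,
        min_one_div_mul_self hμ (hμ' i j)]
    _ ≤ μ' i j := min_le_right _ _

theorem sum_sub_sum_shrink_le (hP : P ∈ transport μ) (hμ' : ∀ i j, 0 ≤ μ' i j) :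
    ∑ x, P x - ∑ x, shrink μ μ' P x ≤ ∑ i, ∑ j, |μ i j - μ' i j| := by
  set α : Fin k → Fin n → ℝ := fun i j => min 1 (μ' i j / μ i j)
  have hpoint : ∀ x, P x - shrink μ μ' P x ≤ ∑ i, (P x - P x * α i (x i)) := fun x => by
    have h := one_sub_prod_le_sum_one_sub univ (a := fun i => α i (x i))
      (fun i _ => (min_one_div_mem_Icc hP hμ' i (x i)).1)
      (fun i _ => (min_one_div_mem_Icc hP hμ' i (x i)).2)
    have := mul_le_mul_of_nonneg_left h (hP.1 x)
    simp only [shrink, mul_sub, mul_sum, mul_one] at this ⊢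
    exact this
  have hrow : ∀ i, ∑ x, (P x - P x * α i (x i)) = ∑ j, (μ i j - min (μ i j) (μ' i j)) := by
    intro i
    have hμ : ∀ j, 0 ≤ μ i j := fun j => hP.2 i j ▸ marg_nonneg hP.1 i j
    rw [sum_sub_distrib, sum_mul_apply, ← sum_marg P i, ← sum_sub_distrib]
    exact sum_congr rfl fun j _ => by rw [hP.2, min_one_div_mul_self (hμ j) (hμ' i j)]
  calc ∑ x, P x - ∑ x, shrink μ μ' P x
      ≤ ∑ x, ∑ i, (P x - P x * α i (x i)) := by
        rw [← sum_sub_distrib]; exact sum_le_sum fun x _ => hpoint x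
    _ = ∑ i, ∑ j, (μ i j - min (μ i j) (μ' i j)) := by
        rw [sum_comm]; exact sum_congr rfl fun i _ => hrow i
    _ ≤ ∑ i, ∑ j, |μ i j - μ' i j| := by
        gcongr with i _ j _
        rcases min_choice (μ i j) (μ' i j) with h | h <;> rw [h]
        · simp
        · exact le_abs_self _

end Shrink

section FillDeficit

variable {n k : ℕ}

/-- When `1 - ∑ R = 0` every deficit vanishes, so the junk value of `/ 0` is harmless. -/
noncomputable def fillDeficit (μ' : Fin k → Fin n → ℝ) (R : (Fin k → Fin n) → ℝ) :
    (Fin k → Fin n) → ℝ :=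
  fun x => R x + (∏ i, (μ' i (x i) - marg R i (x i))) / (1 - ∑ y, R y) ^ (k - 1)

variable {μ' : Fin k → Fin n → ℝ} {R : (Fin k → Fin n) → ℝ}

theorem sum_sub_marg (hμ' : ∀ i, simplex (μ' i)) (i : Fin k) :
    ∑ j, (μ' i j - marg R i j) = 1 - ∑ x, R x := by
  rw [sum_sub_distrib, (hμ' i).2, sum_marg]

theorem one_sub_sum_nonneg [NeZero k] (hμ' : ∀ i, simplex (μ' i))
    (hRμ' : ∀ i j, marg R i j ≤ μ' i j) : 0 ≤ 1 - ∑ x, R x := by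
  rw [← sum_sub_marg hμ' 0]
  exact sum_nonneg fun j _ => sub_nonneg.2 (hRμ' 0 j)

theorem le_fillDeficit [NeZero k] (hμ' : ∀ i, simplex (μ' i))
    (hRμ' : ∀ i j, marg R i j ≤ μ' i j) (x : Fin k → Fin n) : R x ≤ fillDeficit μ' R x :=
  le_add_of_nonneg_right (div_nonneg (prod_nonneg fun i _ => sub_nonneg.2 (hRμ' i (x i)))
    (pow_nonneg (one_sub_sum_nonneg hμ' hRμ') _))

theorem sum_fillDeficit_sub [NeZero k] (hμ' : ∀ i, simplex (μ' i)) :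
    ∑ x, (fillDeficit μ' R x - R x) = 1 - ∑ x, R x := by
  simp only [fillDeficit, add_sub_cancel_left]
  rw [← sum_div, ← Fintype.prod_sum (fun l j => μ' l j - marg R l j)]
  simp only [sum_sub_marg hμ', prod_const, card_univ, Fintype.card_fin]
  exact pow_div_pow_sub_one _ (NeZero.ne k)

theorem marg_fillDeficit [NeZero k] (hμ' : ∀ i, simplex (μ' i))
    (hRμ' : ∀ i j, marg R i j ≤ μ' i j) (i : Fin k) (j : Fin n) :
    marg (fillDeficit μ' R) i j = μ' i j := by
  have hrest : ∏ l ∈ univ.erase i, ∑ j', (μ' l j' - marg R l j') = (1 - ∑ x, R x) ^ (k - 1) := by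
    rw [prod_congr rfl fun l _ => sum_sub_marg hμ' l, prod_const, card_erase_of_mem (mem_univ i),
      card_univ, Fintype.card_fin]
  have hcancel : (μ' i j - marg R i j) * (1 - ∑ x, R x) ^ (k - 1) / (1 - ∑ x, R x) ^ (k - 1)
      = μ' i j - marg R i j := by
    rcases eq_or_ne (1 - ∑ x, R x) 0 with hs | hs
    · have hdef : μ' i j - marg R i j = 0 :=
        (sum_eq_zero_iff_of_nonneg fun j _ => sub_nonneg.2 (hRμ' i j)).1
          ((sum_sub_marg hμ' i).trans hs) j (mem_univ j)
      simp [hdef]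
    · exact mul_div_cancel_right₀ _ (pow_ne_zero _ hs)
  unfold fillDeficit
  rw [marg_add, marg_div, marg_prod (fun l j' => μ' l j' - marg R l j'), hrest, hcancel,
    add_sub_cancel]

theorem fillDeficit_mem_transport [NeZero k] (hμ' : ∀ i, simplex (μ' i))
    (hR : ∀ x, 0 ≤ R x) (hRμ' : ∀ i j, marg R i j ≤ μ' i j) : fillDeficit μ' R ∈ transport μ' :=
  ⟨fun x => (hR x).trans (le_fillDeficit hμ' hRμ' x), marg_fillDeficit hμ' hRμ'⟩

end FillDeficit

/-- rounding a feasible tensor to new marginals with ℓ₁ error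
at most 2 Σᵢ ‖μᵢ − μ'ᵢ‖₁. -/
theorem stmt_5 {n k : ℕ} (μ μ' : Fin k → Fin n → ℝ)
    (hμ : ∀ i, simplex (μ i)) (hμ' : ∀ i, simplex (μ' i))
    (P : (Fin k → Fin n) → ℝ) (hP : P ∈ transport μ) :
    ∃ Q ∈ transport μ',
      ∑ x : Fin k → Fin n, |Q x - P x| ≤ 2 * ∑ i, ∑ j, |μ i j - μ' i j| := by
  rcases Nat.eq_zero_or_pos k with rfl | hk
  · exact ⟨P, ⟨hP.1, fun i => i.elim0⟩, by simp⟩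
  have : NeZero k := ⟨hk.ne'⟩
  have hμ'0 : ∀ i j, 0 ≤ μ' i j := fun i j => (hμ' i).1 j
  set R := shrink μ μ' P
  have hRμ' : ∀ i j, marg R i j ≤ μ' i j := marg_shrink_le hP hμ'0
  set Q := fillDeficit μ' R
  refine ⟨Q, fillDeficit_mem_transport hμ' (shrink_nonneg hP hμ'0) hRμ', ?_⟩
  have hdist : ∀ x, |Q x - P x| ≤ (Q x - R x) + (P x - R x) := fun x => by
    have hRQ := le_fillDeficit hμ' hRμ' x
    have hRP := shrink_le hP hμ'0 x
    exact abs_le.2 ⟨by linarith, by linarith⟩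
  calc ∑ x, |Q x - P x| ≤ ∑ x, ((Q x - R x) + (P x - R x)) := sum_le_sum fun x _ => hdist x
    _ = 2 * (∑ x, P x - ∑ x, R x) := by
      rw [sum_add_distrib, sum_fillDeficit_sub hμ', sum_sub_distrib,
        sum_eq_one_of_mem_transport hμ hP 0]
      ring
    _ ≤ 2 * ∑ i, ∑ j, |μ i j - μ' i j| := by gcongr; exact sum_sub_sum_shrink_le hP hμ'0
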